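/- arXiv:2504.18822 — 2 statements merged into one kernel-verified Lean document; each statement's English description precedes it below -/
import Mathlib

section
/- For any jointly defined square-integrable random vectors X and Y in ℝ^d, ‖C_{X,X} − C_{Y,Y}‖_F ≤ 2 E[‖X − Y‖²] + 2 (E[‖X − Y‖²])^{1/2} (Tr(C_{Y,Y}))^{1/2}. -/
open MeasureTheory ProbabilityTheory Matrix
open scoped ENNReal NNReal

noncomputable section

/-- Frobenius norm of a real matrix. -/
def frob {d : ℕ} (M : Matrix (Fin d) (Fin d) ℝ) : ℝ := Real.sqrt (∑ i, ∑ j, (M i j)^2)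

/-- Cross-covariance matrix of two random vectors. -/
def covM {d : ℕ} {Ω : Type*} [MeasurableSpace Ω] (P : Measure Ω)
    (X Y : Ω → EuclideanSpace ℝ (Fin d)) : Matrix (Fin d) (Fin d) ℝ :=
  Matrix.of fun i j =>
    ∫ ω, (X ω i - ∫ ω', X ω' i ∂P) * (Y ω j - ∫ ω', Y ω' j ∂P) ∂P

/-! Writing `D = X - Y`, bilinearity of covariance gives
`C_{X,X} - C_{Y,Y} = C_{D,D} + C_{D,Y} + C_{Y,D}`. Entrywise Cauchy–Schwarz for covariances bounds
`‖C_{U,V}‖_F` by `(Tr C_{U,U})^{1/2} (Tr C_{V,V})^{1/2}`, and `Tr C_{D,D} ≤ E[‖D‖²]` because a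
variance is at most the second moment. -/

namespace ProbabilityTheory

lemma covariance_sq_le_variance_mul_variance {Ω : Type*} {mΩ : MeasurableSpace Ω}
    {μ : Measure Ω} [IsFiniteMeasure μ] {X Y : Ω → ℝ} (hX : MemLp X 2 μ) (hY : MemLp Y 2 μ) :
    cov[X, Y; μ] ^ 2 ≤ Var[X; μ] * Var[Y; μ] := by
  have hquad : ∀ t : ℝ, 0 ≤ Var[X; μ] * (t * t) + 2 * cov[X, Y; μ] * t + Var[Y; μ] := by
    intro t
    have htX : MemLp (t • X) 2 μ := hX.const_smul t
    have h := variance_nonneg (t • X + Y) μ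
    rw [← covariance_self (htX.add hY).aestronglyMeasurable.aemeasurable,
      covariance_add_left htX hY (htX.add hY), covariance_add_right htX htX hY,
      covariance_add_right hY htX hY, covariance_smul_left, covariance_smul_right,
      covariance_smul_right, covariance_smul_left, covariance_comm Y X,
      covariance_self hX.aestronglyMeasurable.aemeasurable,
      covariance_self hY.aestronglyMeasurable.aemeasurable] at h
    linarith
  have := discrim_le_zero hquad
  rw [discrim] at this
  linarith

end ProbabilityTheory

section Frobenius

variable {d : ℕ}

attribute [local instance] Matrix.frobeniusNormedAddCommGroup in
lemma frob_eq_norm (M : Matrix (Fin d) (Fin d) ℝ) : frob M = ‖M‖ := by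
  rw [frob, frobenius_norm_def, Real.sqrt_eq_rpow]
  simp

attribute [local instance] Matrix.frobeniusNormedAddCommGroup in
lemma frob_add_le (A B : Matrix (Fin d) (Fin d) ℝ) : frob (A + B) ≤ frob A + frob B := by
  simpa only [frob_eq_norm] using norm_add_le A B

lemma frob_le_sqrt_mul_sqrt {M : Matrix (Fin d) (Fin d) ℝ} {a b : Fin d → ℝ}
    (ha : ∀ i, 0 ≤ a i) (hM : ∀ i j, M i j ^ 2 ≤ a i * b j) :
    frob M ≤ √(∑ i, a i) * √(∑ j, b j) := by
  rw [frob, ← Real.sqrt_mul (Finset.sum_nonneg fun i _ => ha i), Finset.sum_mul_sum]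
  exact Real.sqrt_le_sqrt (Finset.sum_le_sum fun i _ => Finset.sum_le_sum fun j _ => hM i j)

end Frobenius

section CovarianceMatrix

variable {d : ℕ} {Ω : Type*} [MeasurableSpace Ω] {P : Measure Ω}
  {X Y Z : Ω → EuclideanSpace ℝ (Fin d)}

lemma covM_apply (X Y : Ω → EuclideanSpace ℝ (Fin d)) (i j : Fin d) :
    covM P X Y i j = cov[fun ω ↦ X ω i, fun ω ↦ Y ω j; P] := rfl

lemma trace_covM_self (hX : MemLp X 2 P) :
    (covM P X X).trace = ∑ i, Var[fun ω ↦ X ω i; P] := by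
  simp only [trace, diag, covM_apply]
  exact Finset.sum_congr rfl fun i _ =>
    covariance_self (hX.eval_piLp i).aestronglyMeasurable.aemeasurable

lemma trace_covM_self_le [IsProbabilityMeasure P] (hX : MemLp X 2 P) :
    (covM P X X).trace ≤ ∫ ω, ‖X ω‖ ^ 2 ∂P := by
  simp_rw [trace_covM_self hX, EuclideanSpace.real_norm_sq_eq]
  rw [integral_finsetSum _ fun i _ => (hX.eval_piLp i).integrable_sq]
  exact Finset.sum_le_sum fun i _ =>
    variance_le_expectation_sq (hX.eval_piLp i).aestronglyMeasurable

variable [IsFiniteMeasure P]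

lemma covM_add_left (hX : MemLp X 2 P) (hY : MemLp Y 2 P) (hZ : MemLp Z 2 P) :
    covM P (X + Y) Z = covM P X Z + covM P Y Z := by
  ext i j
  exact covariance_add_left (hX.eval_piLp i) (hY.eval_piLp i) (hZ.eval_piLp j)

lemma covM_add_right (hX : MemLp X 2 P) (hY : MemLp Y 2 P) (hZ : MemLp Z 2 P) :
    covM P X (Y + Z) = covM P X Y + covM P X Z := by
  ext i j
  exact covariance_add_right (hX.eval_piLp i) (hY.eval_piLp j) (hZ.eval_piLp j)

lemma covM_self_sub_covM_self (hX : MemLp X 2 P) (hY : MemLp Y 2 P) :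
    covM P X X - covM P Y Y =
      covM P (X - Y) (X - Y) + covM P (X - Y) Y + covM P Y (X - Y) := by
  have hD := hX.sub hY
  conv_lhs => rw [← sub_add_cancel X Y]
  rw [covM_add_left hD hY (hD.add hY), covM_add_right hD hD hY, covM_add_right hY hD hY]
  abel

lemma frob_covM_le (hX : MemLp X 2 P) (hY : MemLp Y 2 P) :
    frob (covM P X Y) ≤ √(covM P X X).trace * √(covM P Y Y).trace := by
  rw [trace_covM_self hX, trace_covM_self hY]
  exact frob_le_sqrt_mul_sqrt (fun i => variance_nonneg _ _) fun i j =>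
    covariance_sq_le_variance_mul_variance (hX.eval_piLp i) (hY.eval_piLp j)

end CovarianceMatrix

/-- `‖C_{X,X} − C_{Y,Y}‖_F ≤ 2 E[‖X − Y‖²] + 2 (E[‖X − Y‖²])^{1/2} (Tr C_{Y,Y})^{1/2}`. -/
theorem frob_cov_sub_cov_le {d : ℕ} {Ω : Type*} [MeasurableSpace Ω]
    (P : Measure Ω) [IsProbabilityMeasure P]
    (X Y : Ω → EuclideanSpace ℝ (Fin d))
    (hX : MemLp X 2 P) (hY : MemLp Y 2 P) :
    frob (covM P X X - covM P Y Y) ≤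
      2 * (∫ ω, ‖X ω - Y ω‖^2 ∂P)
        + 2 * Real.sqrt (∫ ω, ‖X ω - Y ω‖^2 ∂P) * Real.sqrt ((covM P Y Y).trace) := by
  set E := ∫ ω, ‖X ω - Y ω‖ ^ 2 ∂P
  set s := √(covM P (X - Y) (X - Y)).trace
  set t := √(covM P Y Y).trace
  have hD := hX.sub hY
  have hE : 0 ≤ E := integral_nonneg fun ω => sq_nonneg _
  have hsE : s ≤ √E := Real.sqrt_le_sqrt (trace_covM_self_le hD)
  have hss : s * s ≤ E :=
    (mul_self_le_mul_self (Real.sqrt_nonneg _) hsE).trans (Real.mul_self_sqrt hE).le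
  have hst : s * t ≤ √E * t := mul_le_mul_of_nonneg_right hsE (Real.sqrt_nonneg _)
  rw [covM_self_sub_covM_self hX hY]
  calc _ ≤ frob (covM P (X - Y) (X - Y)) + frob (covM P (X - Y) Y) + frob (covM P Y (X - Y)) :=
        (frob_add_le _ _).trans (add_le_add_left (frob_add_le _ _) _)
    _ ≤ s * s + s * t + t * s :=
        add_le_add (add_le_add (frob_covM_le hD hD) (frob_covM_le hD hY)) (frob_covM_le hY hD)
    _ ≤ 2 * E + 2 * √E * t := by linarith [mul_comm t s]
end
end

section
/- Let K be a Markov kernel on ℝ^d satisfying the quadratic transportation cost inequality T₂(ρ) pointwise (i.e. (1/2) D₂(ν, K(x,·))² ≤ ρ H(ν | K(x,·)) for all x and ν). Then for any probability measure μ and any Markov kernel L, the conditional means m_K(x) := ∫ y K(x,dy) and m_L(x) := ∫ y L(x,dy) satisfy ∫ μ(dx) ‖m_K(x) − m_L(x)‖² ≤ 2ρ H(μ×L | μ×K). -/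
open MeasureTheory ProbabilityTheory Matrix
open scoped ENNReal NNReal

noncomputable section

/-- Squared 2-Wasserstein distance (extended-real-valued, via couplings). -/
def wass2sqE {d : ℕ} (μ ν : Measure (EuclideanSpace ℝ (Fin d))) : ℝ≥0∞ :=
  sInf {r | ∃ P : Measure (EuclideanSpace ℝ (Fin d) × EuclideanSpace ℝ (Fin d)),
    P.fst = μ ∧ P.snd = ν ∧ r = ∫⁻ p, (‖p.1 - p.2‖₊ : ℝ≥0∞)^2 ∂P}

open scoped Classical in
/-- Relative entropy (Kullback–Leibler divergence), with value `⊤` when not absolutely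
continuous or not integrable. -/
def relEnt {α : Type*} [MeasurableSpace α] (ν η : Measure α) : ℝ≥0∞ :=
  if ν ≪ η ∧ Integrable (llr ν η) ν then ENNReal.ofReal (∫ x, llr ν η x ∂ν) else ⊤

/-! By Jensen, the squared distance between the means of two laws is at most the expected squared
displacement under any coupling of them, hence at most their squared Wasserstein distance; so
`T₂(ρ)` bounds `‖m_K(x) - m_L(x)‖²` by `2ρ H(L x | K x)` for each `x`. Integrating in `x`, the
conditional relative entropy is at most the joint one: writing both as integrals of
`klFun ∘ rnDeriv`, the density of `μ ⊗ₘ L` against `μ ⊗ₘ K` is the kernel density of `L` against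
`K`, and Tonelli applies. -/

open InformationTheory

lemma relEnt_eq_klDiv {α : Type*} [MeasurableSpace α] {ν η : Measure α}
    (h : ν Set.univ = η Set.univ) : relEnt ν η = klDiv ν η := by
  by_cases hc : ν ≪ η ∧ Integrable (llr ν η) ν
  · rw [relEnt, if_pos hc, klDiv_of_ac_of_integrable hc.1 hc.2, measureReal_def,
      measureReal_def, h, add_sub_cancel_right]
  · rw [relEnt, if_neg hc, eq_comm, klDiv_eq_top_iff]
    exact fun hac hint ↦ hc ⟨hac, hint⟩

lemma enorm_integral_sq_le_lintegral_enorm_sq {α E : Type*} [MeasurableSpace α]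
    [NormedAddCommGroup E] [NormedSpace ℝ E] {μ : Measure α} [IsProbabilityMeasure μ]
    {f : α → E} (hf : AEStronglyMeasurable f μ) :
    ‖∫ a, f a ∂μ‖ₑ ^ 2 ≤ ∫⁻ a, ‖f a‖ₑ ^ 2 ∂μ := by
  have hL2 : eLpNorm f 2 μ ^ 2 = ∫⁻ a, ‖f a‖ₑ ^ 2 ∂μ := by
    simpa using eLpNorm_nnreal_pow_eq_lintegral (f := f) (μ := μ) (p := 2) two_ne_zero
  calc ‖∫ a, f a ∂μ‖ₑ ^ 2 ≤ eLpNorm f 1 μ ^ 2 := by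
        rw [eLpNorm_one_eq_lintegral_enorm]
        gcongr
        exact enorm_integral_le_lintegral_enorm f
    _ ≤ eLpNorm f 2 μ ^ 2 := by
        gcongr
        exact eLpNorm_le_eLpNorm_of_exponent_le one_le_two hf
    _ = ∫⁻ a, ‖f a‖ₑ ^ 2 ∂μ := hL2

lemma enorm_integral_snd_sub_integral_fst_sq_le {E : Type*} [NormedAddCommGroup E]
    [NormedSpace ℝ E] [MeasurableSpace E] (P : Measure (E × E)) [IsProbabilityMeasure P]
    (h₁ : Integrable id P.fst) (h₂ : Integrable id P.snd) :
    ‖(∫ y, y ∂P.snd) - ∫ x, x ∂P.fst‖ₑ ^ 2 ≤ ∫⁻ p, ‖p.1 - p.2‖ₑ ^ 2 ∂P := by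
  have hfst : Integrable Prod.fst P := h₁.comp_measurable measurable_fst
  have hsnd : Integrable Prod.snd P := h₂.comp_measurable measurable_snd
  have hmean : (∫ y, y ∂P.snd) - ∫ x, x ∂P.fst = ∫ p, (p.2 - p.1) ∂P := by
    rw [integral_sub hsnd hfst, Measure.snd, Measure.fst,
      integral_map (f := fun y : E ↦ y) measurable_snd.aemeasurable h₂.aestronglyMeasurable,
      integral_map (f := fun x : E ↦ x) measurable_fst.aemeasurable h₁.aestronglyMeasurable]
  rw [hmean]
  simp_rw [enorm_sub_rev _ (Prod.snd _)]
  exact enorm_integral_sq_le_lintegral_enorm_sq (hsnd.sub hfst).aestronglyMeasurable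

lemma enorm_integral_sub_integral_sq_le_wass2sqE {d : ℕ}
    (ν η : Measure (EuclideanSpace ℝ (Fin d))) [IsProbabilityMeasure ν]
    (hν : Integrable id ν) (hη : Integrable id η) :
    ‖(∫ y, y ∂η) - ∫ x, x ∂ν‖ₑ ^ 2 ≤ wass2sqE ν η := by
  refine le_sInf ?_
  rintro r ⟨P, rfl, rfl, rfl⟩
  have : IsProbabilityMeasure P := ⟨by rw [← Measure.fst_univ, measure_univ]⟩
  simpa only [enorm_eq_nnnorm] using enorm_integral_snd_sub_integral_fst_sq_le P hν hη

namespace ProbabilityTheory.Kernel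

variable {α γ : Type*} [MeasurableSpace α] [MeasurableSpace γ]
  [MeasurableSpace.CountableOrCountablyGenerated α γ] {μ : Measure α} {κ η : Kernel α γ}
  [IsFiniteMeasure μ] [IsFiniteKernel κ] [IsFiniteKernel η]

lemma rnDeriv_compProd_ae_eq_rnDeriv (h : μ ⊗ₘ κ ≪ μ ⊗ₘ η) :
    (μ ⊗ₘ κ).rnDeriv (μ ⊗ₘ η) =ᵐ[μ ⊗ₘ η] fun p ↦ κ.rnDeriv η p.1 p.2 := by
  have hκ : κ =ᵐ[μ] η.withDensity (κ.rnDeriv η) := by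
    filter_upwards [h.kernel_of_compProd] with a ha using (withDensity_rnDeriv_eq ha).symm
  rw [Measure.compProd_congr hκ, Measure.compProd_withDensity (measurable_rnDeriv κ η)]
  exact Measure.rnDeriv_withDensity _ (measurable_rnDeriv κ η)

lemma lintegral_klDiv_le_klDiv_compProd :
    ∫⁻ a, klDiv (κ a) (η a) ∂μ ≤ klDiv (μ ⊗ₘ κ) (μ ⊗ₘ η) := by
  by_cases h : μ ⊗ₘ κ ≪ μ ⊗ₘ η
  swap
  · simp [klDiv_of_not_ac h]
  have hmeas : Measurable fun p : α × γ ↦ ENNReal.ofReal (klFun (κ.rnDeriv η p.1 p.2).toReal) :=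
    (measurable_klFun.comp (measurable_rnDeriv κ η).ennreal_toReal).ennreal_ofReal
  have hdensity : ∫⁻ p, ENNReal.ofReal (klFun ((μ ⊗ₘ κ).rnDeriv (μ ⊗ₘ η) p).toReal) ∂(μ ⊗ₘ η)
      = ∫⁻ p, ENNReal.ofReal (klFun (κ.rnDeriv η p.1 p.2).toReal) ∂(μ ⊗ₘ η) :=
    lintegral_congr_ae <| by
      filter_upwards [rnDeriv_compProd_ae_eq_rnDeriv h] with p hp
      rw [hp]
  rw [klDiv_eq_lintegral_klFun, if_pos h, hdensity, Measure.lintegral_compProd hmeas]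
  refine (lintegral_congr_ae ?_).le
  filter_upwards [h.kernel_of_compProd] with a ha
  rw [klDiv_eq_lintegral_klFun, if_pos ha]
  refine lintegral_congr_ae ?_
  filter_upwards [rnDeriv_eq_rnDeriv_measure (κ := κ) (η := η) (a := a)] with b hb
  rw [hb]

end ProbabilityTheory.Kernel

theorem conditional_mean_entropic_bound_general {d : ℕ}
    (μ : Measure (EuclideanSpace ℝ (Fin d))) [IsProbabilityMeasure μ]
    (K L : Kernel (EuclideanSpace ℝ (Fin d)) (EuclideanSpace ℝ (Fin d)))
    [IsMarkovKernel K] [IsMarkovKernel L] (ρ : ℝ)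
    (hK2 : ∀ x, MemLp id 2 (K x)) (hL2 : ∀ x, MemLp id 2 (L x))
    (hT2 : ∀ x (ν : Measure (EuclideanSpace ℝ (Fin d))), IsProbabilityMeasure ν →
      wass2sqE ν (K x) ≤ 2 * ENNReal.ofReal ρ * relEnt ν (K x)) :
    ∫⁻ x, (‖(∫ y, y ∂(K x)) - ∫ y, y ∂(L x)‖₊ : ℝ≥0∞)^2 ∂μ ≤
      2 * ENNReal.ofReal ρ * relEnt (μ ⊗ₘ L) (μ ⊗ₘ K) := by
  have hpointwise : ∀ x, (‖(∫ y, y ∂(K x)) - ∫ y, y ∂(L x)‖₊ : ℝ≥0∞)^2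
      ≤ 2 * ENNReal.ofReal ρ * klDiv (L x) (K x) := fun x ↦ by
    rw [← relEnt_eq_klDiv (by simp), ← enorm_eq_nnnorm]
    exact (enorm_integral_sub_integral_sq_le_wass2sqE (L x) (K x)
      ((hL2 x).integrable one_le_two) ((hK2 x).integrable one_le_two)).trans
      (hT2 x (L x) inferInstance)
  calc ∫⁻ x, (‖(∫ y, y ∂(K x)) - ∫ y, y ∂(L x)‖₊ : ℝ≥0∞)^2 ∂μ
      ≤ ∫⁻ x, 2 * ENNReal.ofReal ρ * klDiv (L x) (K x) ∂μ := lintegral_mono hpointwise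
    _ = 2 * ENNReal.ofReal ρ * ∫⁻ x, klDiv (L x) (K x) ∂μ :=
        lintegral_const_mul' _ _ (by finiteness)
    _ ≤ 2 * ENNReal.ofReal ρ * klDiv (μ ⊗ₘ L) (μ ⊗ₘ K) := by
        gcongr
        exact Kernel.lintegral_klDiv_le_klDiv_compProd
    _ = 2 * ENNReal.ofReal ρ * relEnt (μ ⊗ₘ L) (μ ⊗ₘ K) := by
        rw [relEnt_eq_klDiv (by simp)]

/-- Entropic bound for conditional means: if `K` satisfies `T₂(ρ)` pointwise, then
`∫ μ(dx) ‖m_K(x) − m_L(x)‖² ≤ 2ρ H(μ×L | μ×K)`. -/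
theorem conditional_mean_entropic_bound {d : ℕ}
    (μ : Measure (EuclideanSpace ℝ (Fin d))) [IsProbabilityMeasure μ]
    (K L : Kernel (EuclideanSpace ℝ (Fin d)) (EuclideanSpace ℝ (Fin d)))
    [IsMarkovKernel K] [IsMarkovKernel L] (ρ : ℝ) (hρ : 0 < ρ)
    (hK2 : ∀ x, MemLp id 2 (K x)) (hL2 : ∀ x, MemLp id 2 (L x))
    (hT2 : ∀ x (ν : Measure (EuclideanSpace ℝ (Fin d))), IsProbabilityMeasure ν →
      wass2sqE ν (K x) ≤ 2 * ENNReal.ofReal ρ * relEnt ν (K x)) :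
    ∫⁻ x, (‖(∫ y, y ∂(K x)) - ∫ y, y ∂(L x)‖₊ : ℝ≥0∞)^2 ∂μ ≤
      2 * ENNReal.ofReal ρ * relEnt (μ ⊗ₘ L) (μ ⊗ₘ K) :=
  conditional_mean_entropic_bound_general μ K L ρ hK2 hL2 hT2
end
end
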